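/- For every k ∈ ℂ, every pair of column vectors y, ỹ ∈ ℂ², and each ε ∈ {+1,−1}: P_ε·{ (a₁₂^{−ε}·a₂₁^{−ε} − a₁₁^{−ε}·a₂₂^{−ε})·I + 2·conj(k)·[ |ỹ⟩·(conj(a₁₁^ε)·⟨ỹ| − conj(a₁₂^ε)·⟨y|) − |y⟩·(conj(a₂₁^ε)·⟨ỹ| − conj(a₂₂^ε)·⟨y|) ] }·P_ε = 0, where P_ε = (I+εσ₃)/2. -/

import Mathlib

open Matrix Complex ComplexConjugate

noncomputable section

abbrev M2 := Matrix (Fin 2) (Fin 2) ℂ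
abbrev Vec2 := Matrix (Fin 2) (Fin 1) ℂ

def sigma3 : M2 := !![1, 0; 0, -1]
def sigma2 : M2 := !![0, -Complex.I; Complex.I, 0]

/-- ⟨u|M|v⟩ = u†Mv -/
def qform (u : Vec2) (M : M2) (v : Vec2) : ℂ := (uᴴ * M * v) 0 0

def a11 (k : ℂ) (y : Vec2) (ε : ℂ) : ℂ :=
  k * qform y (1 + ε • sigma3) y + conj k * qform y (1 - ε • sigma3) y

def a12 (k : ℂ) (y yt : Vec2) (ε : ℂ) : ℂ :=
  k * qform y (1 + ε • sigma3) yt + conj k * qform y (1 - ε • sigma3) yt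

def a21 (k : ℂ) (y yt : Vec2) (ε : ℂ) : ℂ :=
  k * qform yt (1 + ε • sigma3) y + conj k * qform yt (1 - ε • sigma3) y

def a22 (k : ℂ) (yt : Vec2) (ε : ℂ) : ℂ :=
  k * qform yt (1 + ε • sigma3) yt + conj k * qform yt (1 - ε • sigma3) yt

def b11 (k : ℂ) (y : Vec2) (ε : ℂ) : ℂ :=
  (k ^ 2 + (conj k) ^ 2) * qform y (1 + ε • sigma3) y
    + 2 * k * conj k * qform y (1 - ε • sigma3) y

def b12 (k : ℂ) (y yt : Vec2) (ε : ℂ) : ℂ :=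
  (k ^ 2 + (conj k) ^ 2) * qform y (1 + ε • sigma3) yt
    + 2 * k * conj k * qform y (1 - ε • sigma3) yt

def b21 (k : ℂ) (y yt : Vec2) (ε : ℂ) : ℂ :=
  (k ^ 2 + (conj k) ^ 2) * qform yt (1 + ε • sigma3) y
    + 2 * k * conj k * qform yt (1 - ε • sigma3) y

def c11 (k : ℂ) (y : Vec2) (ε : ℂ) : ℂ :=
  (k ^ 3 + 3 * k * (conj k) ^ 2) * qform y (1 + ε • sigma3) y
    + ((conj k) ^ 3 + 3 * conj k * k ^ 2) * qform y (1 - ε • sigma3) y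

def Δf (k : ℂ) (y yt : Vec2) (ε : ℂ) : ℂ :=
  (k ^ 2 - (conj k) ^ 2) ^ 2
      * (a21 k y yt ε * a12 k y yt ε - a11 k y ε * a22 k yt ε)
    + 2 * a11 k y ε * c11 k y (-ε) - b11 k y ε * b11 k y (-ε)
    + (k ^ 2 - (conj k) ^ 2)
      * (a21 k y yt ε * b11 k y (-ε) - a12 k y yt ε * b11 k y ε
          + a11 k y ε * (b12 k y yt ε - b21 k y yt (-ε)))

/-- P_ε = (I+εσ₃)/2 -/
def Pe (ε : ℂ) : M2 := (1 / 2 : ℂ) • (1 + ε • sigma3)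

/-!
Write `a^ε_{uv} = ⟨u|W_ε|v⟩` with `W_ε = k(I+εσ₃) + k̄(I−εσ₃)` (`aWeight`) and let `F = (y | ỹ)`.
The `a^{−ε}_{ij}` are the entries of the Gram matrix `F†W_{−ε}F`, so the scalar in front of `I`
is `−|det F|² det W_{−ε}`, while the rank-one combination in brackets is
`F · adj(F†W_ε†F) · F† = |det F|² adj(W_ε†)`. The whole bracket is therefore
`|det F|² (2k̄ adj(W_ε†) − det W_{−ε} I)`; for `ε = ±1` both matrices are diagonal and their
entries picked out by `P_ε` are both `4|k|²`.
-/

def aWeight (k ε : ℂ) : M2 := k • (1 + ε • sigma3) + conj k • (1 - ε • sigma3)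

def frame (y yt : Vec2) : M2 := !![y 0 0, yt 0 0; y 1 0, yt 1 0]

lemma smul_qform_add_smul_qform (u v : Vec2) (a b : ℂ) (M N : M2) :
    a * qform u M v + b * qform u N v = qform u (a • M + b • N) v := by
  simp only [qform, Matrix.mul_add, Matrix.add_mul, Matrix.mul_smul, Matrix.smul_mul,
    Matrix.add_apply, Matrix.smul_apply, smul_eq_mul]

lemma a11_eq (k : ℂ) (y : Vec2) (ε : ℂ) : a11 k y ε = qform y (aWeight k ε) y :=
  smul_qform_add_smul_qform ..

lemma a12_eq (k : ℂ) (y yt : Vec2) (ε : ℂ) : a12 k y yt ε = qform y (aWeight k ε) yt :=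
  smul_qform_add_smul_qform ..

lemma a21_eq (k : ℂ) (y yt : Vec2) (ε : ℂ) : a21 k y yt ε = qform yt (aWeight k ε) y :=
  smul_qform_add_smul_qform ..

lemma a22_eq (k : ℂ) (yt : Vec2) (ε : ℂ) : a22 k yt ε = qform yt (aWeight k ε) yt :=
  smul_qform_add_smul_qform ..

lemma conj_qform (u v : Vec2) (M : M2) : conj (qform u M v) = qform v Mᴴ u := by
  rw [qform, qform, ← conjTranspose_conjTranspose u, ← conjTranspose_mul, ← conjTranspose_mul,
    conjTranspose_conjTranspose, conjTranspose_apply, Matrix.mul_assoc]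
  rfl

lemma frame_conjTranspose_mul_mul_frame (y yt : Vec2) (M : M2) :
    (frame y yt)ᴴ * M * frame y yt
      = !![qform y M y, qform y M yt; qform yt M y, qform yt M yt] := by
  ext i j
  fin_cases i <;> fin_cases j <;>
    simp [frame, qform, Matrix.mul_apply, Fin.sum_univ_two]

lemma qform_mul_qform_sub_qform_mul_qform (y yt : Vec2) (M : M2) :
    qform y M yt * qform yt M y - qform y M y * qform yt M yt
      = -(star (frame y yt).det * M.det * (frame y yt).det) := by
  have h := congrArg det (frame_conjTranspose_mul_mul_frame y yt M)
  rw [det_mul, det_mul, det_conjTranspose, det_fin_two_of] at h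
  linear_combination h

lemma frame_mul_adjugate_mul_conjTranspose (y yt : Vec2) (M : M2) :
    frame y yt * adjugate ((frame y yt)ᴴ * M * frame y yt) * (frame y yt)ᴴ
      = yt * (qform y M y • ytᴴ - qform yt M y • yᴴ)
          - y * (qform y M yt • ytᴴ - qform yt M yt • yᴴ) := by
  rw [frame_conjTranspose_mul_mul_frame, adjugate_fin_two_of]
  ext i j
  fin_cases i <;> fin_cases j <;>
    simp [frame, Matrix.mul_apply, Fin.sum_univ_two] <;> ring

lemma sub_rank_one_eq_smul_adjugate (y yt : Vec2) (M : M2) :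
    yt * (conj (qform y M y) • ytᴴ - conj (qform y M yt) • yᴴ)
        - y * (conj (qform yt M y) • ytᴴ - conj (qform yt M yt) • yᴴ)
      = (star (frame y yt).det * (frame y yt).det) • adjugate Mᴴ := by
  set F := frame y yt
  simp only [conj_qform]
  rw [← frame_mul_adjugate_mul_conjTranspose, adjugate_mul_distrib, adjugate_mul_distrib]
  calc F * (adjugate F * (adjugate Mᴴ * adjugate Fᴴ)) * Fᴴ
      = (F * adjugate F) * adjugate Mᴴ * (adjugate Fᴴ * Fᴴ) := by simp only [Matrix.mul_assoc]
    _ = _ := by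
      rw [mul_adjugate, adjugate_mul, det_conjTranspose]
      simp only [Matrix.smul_mul, Matrix.mul_smul, Matrix.one_mul, Matrix.mul_one, smul_smul]

lemma Pe_mul_adjugate_sub_det_mul_Pe (k ε : ℂ) (hε : ε = 1 ∨ ε = -1) :
    Pe ε * ((2 * conj k) • adjugate (aWeight k ε)ᴴ - (aWeight k (-ε)).det • (1 : M2)) * Pe ε
      = 0 := by
  rcases hε with rfl | rfl <;> ext i j <;> fin_cases i <;> fin_cases j <;>
    simp [Pe, aWeight, sigma3, adjugate_fin_two, det_fin_two, Matrix.mul_apply, Fin.sum_univ_two,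
      one_add_one_eq_two] <;> ring

theorem lemma2_first (k : ℂ) (y yt : Vec2) (ε : ℂ) (hε : ε = 1 ∨ ε = -1) :
    Pe ε * ((a12 k y yt (-ε) * a21 k y yt (-ε) - a11 k y (-ε) * a22 k yt (-ε)) • (1 : M2)
        + (2 * conj k) •
          (yt * (conj (a11 k y ε) • ytᴴ - conj (a12 k y yt ε) • yᴴ)
            - y * (conj (a21 k y yt ε) • ytᴴ - conj (a22 k yt ε) • yᴴ))) * Pe ε
      = 0 := by
  simp only [a11_eq, a12_eq, a21_eq, a22_eq]
  rw [qform_mul_qform_sub_qform_mul_qform, sub_rank_one_eq_smul_adjugate]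
  set c := star (frame y yt).det * (frame y yt).det
  have hfactor : -(star (frame y yt).det * (aWeight k (-ε)).det * (frame y yt).det) • (1 : M2)
        + (2 * conj k) • (c • adjugate (aWeight k ε)ᴴ)
      = c • ((2 * conj k) • adjugate (aWeight k ε)ᴴ - (aWeight k (-ε)).det • (1 : M2)) := by
    module
  rw [hfactor, Matrix.mul_smul, Matrix.smul_mul, Pe_mul_adjugate_sub_det_mul_Pe k ε hε, smul_zero]
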